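/- arXiv:1909.03542 — 2 statements merged into one kernel-verified Lean document; each statement's English description precedes it below -/
import Mathlib

section
/- Let S be an affine subspace of ℝ^d of dimension k, and let n ∈ ℕ. Then the intersection of S with the lattice cube {0,...,n-1}^d has cardinality at most n^k. -/
lemma aux_sep (d : ℕ) : ∀ m : ℕ, ∀ W : Submodule ℝ (Fin d → ℝ), Module.finrank ℝ W ≤ m →
    ∃ s : Finset (Fin d), s.card ≤ m ∧ ∀ v ∈ W, (∀ i ∈ s, v i = 0) → v = 0 := by
  intro m
  induction m with
  | zero =>
    intro W hW
    refine ⟨∅, le_refl _, ?_⟩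
    have hW0 : W = ⊥ := Submodule.finrank_eq_zero.mp (Nat.le_zero.mp hW)
    intro v hv _
    simpa [hW0] using hv
  | succ m ih =>
    intro W hW
    by_cases hbot : W = ⊥
    · exact ⟨∅, Nat.zero_le _, fun v hv _ => by simpa [hbot] using hv⟩
    · obtain ⟨v, hvW, hv0⟩ := (Submodule.ne_bot_iff W).mp hbot
      obtain ⟨i, hvi⟩ := Function.ne_iff.mp hv0
      set W' := W ⊓ LinearMap.ker (LinearMap.proj (R := ℝ) (φ := fun _ : Fin d => ℝ) i) with hW'
      have hne : W' ≠ W := by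
        intro h
        have : v ∈ W' := h ▸ hvW
        exact hvi (this.2)
      have hlt : W' < W := lt_of_le_of_ne inf_le_left hne
      have hfr : Module.finrank ℝ W' ≤ m := by
        have := Submodule.finrank_lt_finrank_of_lt hlt
        omega
      obtain ⟨s, hs, hsep⟩ := ih W' hfr
      refine ⟨insert i s, ?_, ?_⟩
      · exact le_trans (Finset.card_insert_le _ _) (Nat.succ_le_succ hs)
      · intro w hw h0
        refine hsep w ⟨hw, ?_⟩ (fun j hj => h0 j (Finset.mem_insert_of_mem hj))
        simpa [LinearMap.mem_ker] using h0 i (Finset.mem_insert_self _ _)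

theorem stmt0 (d n k : ℕ) (S : AffineSubspace ℝ (Fin d → ℝ))
    (hk : Module.finrank ℝ S.direction = k) :
    ((S : Set (Fin d → ℝ)) ∩ {x | ∀ i, ∃ m : ℕ, m < n ∧ x i = m}).ncard ≤ n ^ k := by
  classical
  rcases Nat.eq_zero_or_pos n with hn | hn
  · subst hn
    rcases Nat.eq_zero_or_pos d with hd | hd
    · subst hd
      have hsub : ((S : Set (Fin 0 → ℝ)) ∩ {x | ∀ i, ∃ m : ℕ, m < 0 ∧ x i = m}).Subsingleton := by
        intro x _ y _
        funext i
        exact absurd i.2 (by omega)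
      have hk0 : k = 0 := by
        have : Module.finrank ℝ S.direction = 0 := by
          simp [Module.finrank_zero_of_subsingleton]
        omega
      have hfin : ((S : Set (Fin 0 → ℝ)) ∩ {x | ∀ i, ∃ m : ℕ, m < 0 ∧ x i = m}).Finite :=
        Set.Finite.subset (Set.finite_univ) (Set.subset_univ _)
      calc _ ≤ 1 := (Set.ncard_le_one hfin).mpr (fun a ha b hb => hsub ha hb)
        _ = 0 ^ k := by simp [hk0]
    · have : ((S : Set (Fin d → ℝ)) ∩ {x | ∀ i, ∃ m : ℕ, m < 0 ∧ x i = m}) = ∅ := by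
        ext x
        simp only [Set.mem_inter_iff, Set.mem_setOf_eq, Set.mem_empty_iff_false, iff_false]
        rintro ⟨-, h⟩
        obtain ⟨m, hm, -⟩ := h ⟨0, hd⟩
        omega
      rw [this, Set.ncard_empty]
      exact Nat.zero_le _
  · obtain ⟨s, hscard, hsep⟩ := aux_sep d k S.direction (le_of_eq hk)
    set A := ((S : Set (Fin d → ℝ)) ∩ {x | ∀ i, ∃ m : ℕ, m < n ∧ x i = m})
    set g : (Fin d → ℝ) → (↥s → Fin n) := fun x i => ⟨Nat.floor (x i.1) % n, Nat.mod_lt _ hn⟩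
      with hg
    have hgx : ∀ x ∈ A, ∀ i : ↥s, (x i.1 : ℝ) = ((g x i : ℕ) : ℝ) := by
      intro x hx i
      obtain ⟨m, hm, hxm⟩ := hx.2 i.1
      simp [hg, hxm, Nat.mod_eq_of_lt hm]
    have hinj : Set.InjOn g A := by
      intro x hx y hy hxy
      have hd : ∀ i ∈ s, x i - y i = 0 := by
        intro i hi
        have := hgx x hx ⟨i, hi⟩
        have h2 := hgx y hy ⟨i, hi⟩
        rw [this, h2, hxy]
        ring
      have hsub : x - y ∈ S.direction := by
        simpa using AffineSubspace.vsub_mem_direction hx.1 hy.1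
      have := hsep (x - y) hsub (by simpa using hd)
      have : x = y := by
        funext i
        have := congrFun this i
        simp at this
        linarith [this]
      exact this
    calc A.ncard ≤ (Set.univ : Set (↥s → Fin n)).ncard :=
          Set.ncard_le_ncard_of_injOn g (fun a _ => Set.mem_univ _) hinj Set.finite_univ
      _ = n ^ s.card := by
          rw [Set.ncard_univ, Nat.card_eq_fintype_card]
          simp
      _ ≤ n ^ k := Nat.pow_le_pow_right hn hscard
end

section
/- The minimum number of k-dimensional affine subspaces of ℝ^d needed to cover the lattice cube {0,...,n-1}^d is exactly n^(d-k). -/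
/-!
A `k`-dimensional affine subspace `A` meets the grid `{0, …, n-1}^d` in at most `n^k` points:
the coordinate functionals span the dual of the direction of `A`, so `k` of them already
separate its points, and a grid point of `A` is determined by those `k` coordinates. Counting
gives the lower bound; the `n^(d-k)` translates of a `k`-dimensional coordinate subspace give
a matching cover.
-/

open Module Finset

theorem Submodule.exists_finset_card_le_finrank_forall_eq_zero {K ι : Type*} [Field K]
    [Fintype ι] (V : Submodule K (ι → K)) :
    ∃ I : Finset ι, #I ≤ finrank K V ∧ ∀ v ∈ V, (∀ i ∈ I, v i = 0) → v = 0 := by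
  let φ : ι → Dual K V := fun i => (LinearMap.proj i).comp V.subtype
  obtain ⟨κ, a, ha, hspan, hli⟩ := exists_linearIndependent' K φ
  have := Finite.of_injective a ha
  have := Fintype.ofFinite κ
  refine ⟨univ.map ⟨a, ha⟩, ?_, fun v hv hvI => ?_⟩
  · rw [card_map, card_univ, ← Subspace.dual_finrank_eq]
    exact hli.fintype_card_le_finrank
  have hker : span K (Set.range φ) ≤ LinearMap.ker (Dual.eval K V ⟨v, hv⟩) := by
    rw [← hspan, span_le]
    rintro _ ⟨c, rfl⟩
    exact hvI _ (Finset.mem_map_of_mem _ (mem_univ c))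
  funext i
  exact hker (subset_span ⟨i, rfl⟩)

theorem AffineSubspace.card_filter_comp_mem_le {K ι α : Type*} [Field K] [Fintype ι]
    [DecidableEq ι] [Fintype α] [Nonempty α] (A : AffineSubspace K (ι → K))
    [DecidablePred (· ∈ A)] {c : α → K} (hc : Function.Injective c) :
    #{g : ι → α | c ∘ g ∈ A} ≤ Fintype.card α ^ finrank K A.direction := by
  obtain ⟨I, hI, hV⟩ := A.direction.exists_finset_card_le_finrank_forall_eq_zero
  have hinj : Set.InjOn (I.restrict (π := fun _ => α))
      (({g | c ∘ g ∈ A} : Finset (ι → α)) : Set (ι → α)) := by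
    intro g hg h hh hgh
    rw [coe_filter] at hg hh
    have hzero := hV _ (AffineSubspace.vsub_mem_direction hg.2 hh.2) fun i hi => by
      simp [show g i = h i from congrFun hgh ⟨i, hi⟩]
    exact hc.comp_left (sub_eq_zero.1 hzero)
  calc #{g : ι → α | c ∘ g ∈ A} ≤ #(univ : Finset (I → α)) :=
        card_le_card_of_injOn _ (fun _ _ => mem_univ _) hinj
    _ = Fintype.card α ^ #I := by simp
    _ ≤ Fintype.card α ^ finrank K A.direction := Nat.pow_le_pow_right Fintype.card_pos hI

theorem card_pow_le_mul_of_range_subset_iUnion {K ι α β : Type*} [Field K] [Fintype ι]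
    [DecidableEq ι] [Fintype α] [Nonempty α] [Fintype β] {c : α → K} (hc : Function.Injective c)
    {k : ℕ} (S : β → AffineSubspace K (ι → K)) (hS : ∀ i, finrank K (S i).direction ≤ k)
    (hcov : Set.range (fun g : ι → α => c ∘ g) ⊆ ⋃ i, (S i : Set (ι → K))) :
    Fintype.card α ^ Fintype.card ι ≤ Fintype.card β * Fintype.card α ^ k := by
  classical
  have hsub : (univ : Finset (ι → α)) ⊆ univ.biUnion fun i => {g | c ∘ g ∈ S i} := by
    intro g _
    obtain ⟨i, hi⟩ := Set.mem_iUnion.1 (hcov ⟨g, rfl⟩)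
    simpa using ⟨i, hi⟩
  calc Fintype.card α ^ Fintype.card ι = #(univ : Finset (ι → α)) := by simp
    _ ≤ ∑ i, #{g : ι → α | c ∘ g ∈ S i} := (card_le_card hsub).trans card_biUnion_le
    _ ≤ ∑ _i : β, Fintype.card α ^ k := sum_le_sum fun i _ =>
        ((S i).card_filter_comp_mem_le hc).trans (Nat.pow_le_pow_right Fintype.card_pos (hS i))
    _ = Fintype.card β * Fintype.card α ^ k := by simp

theorem LinearMap.finrank_ker_funLeft {K ι κ : Type*} [Field K] [Fintype ι] [Fintype κ]
    {e : κ → ι} (he : Function.Injective e) :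
    finrank K (ker (funLeft K K e)) = Fintype.card ι - Fintype.card κ := by
  have h := finrank_range_add_finrank_ker (funLeft K K e)
  rw [range_eq_top.2 (funLeft_surjective_of_injective K K e he), finrank_top] at h
  simp only [finrank_fintype_fun_eq_card] at h
  omega

theorem exists_affineSubspaces_range_subset_iUnion {K ι κ α : Type*} [Field K] [Fintype ι]
    [Fintype κ] {e : κ → ι} (he : Function.Injective e) (c : α → K) :
    ∃ S : (κ → α) → AffineSubspace K (ι → K),
      (∀ f, finrank K (S f).direction = Fintype.card ι - Fintype.card κ) ∧
      Set.range (fun g : ι → α => c ∘ g) ⊆ ⋃ f, (S f : Set (ι → K)) := by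
  refine ⟨fun f => .mk' (Function.extend e (c ∘ f) 0) (LinearMap.ker (LinearMap.funLeft K K e)),
    fun f => by rw [AffineSubspace.direction_mk', LinearMap.finrank_ker_funLeft he], ?_⟩
  rintro _ ⟨g, rfl⟩
  refine Set.mem_iUnion.2 ⟨g ∘ e, ?_⟩
  rw [SetLike.mem_coe, AffineSubspace.mem_mk', LinearMap.mem_ker]
  funext j
  simp [LinearMap.funLeft_apply, he.extend_apply]

theorem setOf_forall_exists_lt_eq_range (n d : ℕ) :
    {x : Fin d → ℝ | ∀ i, ∃ a : ℕ, a < n ∧ x i = a} =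
      Set.range fun g : Fin d → Fin n => (fun a : Fin n => ((a : ℕ) : ℝ)) ∘ g := by
  ext x
  refine ⟨fun hx => ?_, ?_⟩
  · choose a ha hxa using hx
    exact ⟨fun i => ⟨a i, ha i⟩, funext fun i => (hxa i).symm⟩
  · rintro ⟨g, rfl⟩ i
    exact ⟨g i, (g i).2, rfl⟩

theorem stmt3 (n d k : ℕ) (hk : k ≤ d) (hn : 1 ≤ n) :
    IsLeast {m : ℕ | ∃ S : Fin m → AffineSubspace ℝ (Fin d → ℝ),
        (∀ i, Module.finrank ℝ (S i).direction = k) ∧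
        {x : Fin d → ℝ | ∀ i, ∃ a : ℕ, a < n ∧ x i = a} ⊆ ⋃ i, (S i : Set (Fin d → ℝ))}
      (n ^ (d - k)) := by
  have hc : Function.Injective fun a : Fin n => ((a : ℕ) : ℝ) :=
    Nat.cast_injective.comp Fin.val_injective
  have : Nonempty (Fin n) := ⟨⟨0, hn⟩⟩
  rw [setOf_forall_exists_lt_eq_range]
  constructor
  · obtain ⟨S, hdim, hcov⟩ := exists_affineSubspaces_range_subset_iUnion
      (Fin.castLE_injective (Nat.sub_le d k)) fun a : Fin n => ((a : ℕ) : ℝ)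
    let e : Fin (n ^ (d - k)) ≃ (Fin (d - k) → Fin n) := (Fintype.equivFinOfCardEq (by simp)).symm
    refine ⟨S ∘ e, fun i => ?_, ?_⟩
    · rw [Function.comp_apply, hdim, Fintype.card_fin, Fintype.card_fin]
      omega
    · rwa [Function.comp_def, e.surjective.iUnion_comp (fun f => (S f : Set (Fin d → ℝ)))]
  · rintro m ⟨S, hdim, hcov⟩
    have hcount := card_pow_le_mul_of_range_subset_iUnion hc S (fun i => (hdim i).le) hcov
    simp only [Fintype.card_fin] at hcount
    rw [← Nat.sub_add_cancel hk, pow_add] at hcount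
    exact Nat.le_of_mul_le_mul_right hcount (pow_pos hn k)
end
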